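/- Let λ be a real algebraic number. For every ε > 0 there exists N such that for all n ≥ N, the number of distinct real values of the form ∑_{k=0}^{n−1} ε_k λ^k with ε_k ∈ {0,1} is at most e^{εn} · M(λ)^n, where M(λ) is the Mahler measure of λ. -/

import Mathlib

open MeasureTheory Filter

/-- Shannon entropy of the pushforward of the weights `p` under the map `f`:
`H = -∑_y q({y}) log q({y})` where `q` is the image of `p` under `f`. -/
noncomputable def mapEntropy {ι S : Type*} [Fintype ι] (p : ι → ℝ) (f : ι → S) : ℝ :=
  letI := Classical.decEq S
  ∑ s ∈ Finset.univ.image f,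
    Real.negMulLog (∑ i ∈ Finset.univ.filter (fun i => f i = s), p i)

/-- Composition `φ_{a 0} ∘ ⋯ ∘ φ_{a (k-1)}` of the maps of an IFS. -/
def compIFS {Λ : Type*} (φ : Λ → ℝ → ℝ) {k : ℕ} (a : Fin k → Λ) : ℝ → ℝ :=
  (List.ofFn fun j => φ (a j)).foldr (· ∘ ·) id

/-- The IFS `φ` has exact overlaps: two distinct words of equal length give
the same composition. -/
def HasExactOverlaps {Λ : Type*} (φ : Λ → ℝ → ℝ) : Prop :=
  ∃ (k : ℕ) (a b : Fin k → Λ), 1 ≤ k ∧ a ≠ b ∧ compIFS φ a = compIFS φ b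

/-- `μ` is exact dimensional with dimension `α`:
for `μ`-a.e. `x`, `log μ([x-r,x+r]) / log r → α` as `r → 0+`. -/
def ExactDimensional (μ : Measure ℝ) (α : ℝ) : Prop :=
  ∀ᵐ x ∂μ, Tendsto
    (fun r : ℝ => Real.log (μ (Set.Icc (x - r) (x + r))).toReal / Real.log r)
    (nhdsWithin 0 (Set.Ioi 0)) (nhds α)

/-- `H_N(Φ,p)`: Shannon entropy of the pushforward of `p^{⊗N}` under
`(i_1,…,i_N) ↦ φ_{i_1} ∘ ⋯ ∘ φ_{i_N}`. -/
noncomputable def iterEntropy {Λ : Type*} [Fintype Λ] (φ : Λ → ℝ → ℝ) (p : Λ → ℝ) (N : ℕ) : ℝ :=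
  mapEntropy (fun i : Fin N → Λ => ∏ k, p (i k)) (fun i => compIFS φ i)

/-- `H_N(λ)`: Shannon entropy of the distribution of `∑_{n<N} ω_n λ^n`,
`ω_n` i.i.d. uniform on `{-1,1}`. -/
noncomputable def bcEntropyN (l : ℝ) (N : ℕ) : ℝ :=
  mapEntropy (fun _ : Fin N → Bool => (1/2 : ℝ) ^ N)
    (fun ω => ∑ n : Fin N, (if ω n then (1:ℝ) else -1) * l ^ (n : ℕ))

/-- `P` is a primitive integer minimal polynomial of `l`. -/
def IsMinIntPoly (l : ℝ) (P : Polynomial ℤ) : Prop :=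
  P ≠ 0 ∧ Polynomial.aeval l P = 0 ∧ P.IsPrimitive ∧
    ∀ Q : Polynomial ℤ, Q ≠ 0 → Polynomial.aeval l Q = 0 → P.degree ≤ Q.degree

/-- Mahler measure of an integer polynomial `P = a_n (x - α_1) ⋯ (x - α_n)`:
`|a_n| ∏ max (1, |α_j|)`. -/
noncomputable def mahlerM (P : Polynomial ℤ) : ℝ :=
  |(P.leadingCoeff : ℝ)| *
    ((P.map (Int.castRingHom ℂ)).roots.map (fun z => max 1 ‖z‖)).prod

/-- `β` is a Pisot number: a real algebraic integer `β > 1` all of whose Galois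
conjugates other than `β` itself have modulus `< 1`. -/
def IsPisot (β : ℝ) : Prop :=
  1 < β ∧ IsIntegral ℤ β ∧
    ∀ z : ℂ, Polynomial.aeval z (minpoly ℚ β) = 0 → z = (β : ℂ) ∨ ‖z‖ < 1

/-!
Two distinct sums differ by `R(λ)` for an integer polynomial `R` of degree `< n` with
coefficients in `{-1, 0, 1}`. As `P` is irreducible over `ℚ` and `R(λ) ≠ 0`, the resultant of
`P` and `R` is a nonzero integer; it equals `a^(deg R) ∏ R(α)`, where `a` is the leading
coefficient of `P` and `α` runs over its complex roots. Bounding `|R(α)| ≤ n max(1, |α|)^n` at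
the conjugates `α ≠ λ` gives `|R(λ)| ≥ max(1, |λ|)^n / (n^d M(λ)^n)` with `d = deg P`. All the
sums lie in `[-B, B]` with `B = n max(1, |λ|)^n`, so there are at most `2 n^(d+1) M(λ)^n + 1`
of them, and the polynomial factor is absorbed by `e^(εn)`.
-/

open Polynomial Finset

theorem IsMinIntPoly.irreducible_map {l : ℝ} {P : ℤ[X]} (hP : IsMinIntPoly l P) :
    Irreducible (P.map (Int.castRingHom ℚ)) := by
  obtain ⟨hP0, hPl, -, hmin⟩ := hP
  have hPℚl : aeval l (P.map (Int.castRingHom ℚ)) = 0 := by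
    rwa [← algebraMap_int_eq, aeval_map_algebraMap]
  have hPℚ0 : P.map (Int.castRingHom ℚ) ≠ 0 :=
    (Polynomial.map_ne_zero_iff Int.cast_injective).2 hP0
  have hl : IsIntegral ℚ l := IsAlgebraic.isIntegral ⟨_, hPℚ0, hPℚl⟩
  set Q := IsLocalization.integerNormalization (nonZeroDivisors ℤ) (minpoly ℚ l)
  have hQ0 : Q ≠ 0 := by
    rw [Ne, IsFractionRing.integerNormalization_eq_zero_iff]
    exact minpoly.ne_zero hl
  have hQl : aeval l Q = 0 :=
    IsLocalization.integerNormalization_aeval_eq_zero _ _ (minpoly.aeval ℚ l)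
  have hdeg : (P.map (Int.castRingHom ℚ)).natDegree ≤ (minpoly ℚ l).natDegree := by
    rw [natDegree_map_eq_of_injective Int.cast_injective]
    exact natDegree_le_natDegree
      ((hmin Q hQ0 hQl).trans (degree_mono (IsLocalization.integerNormalization_support _ _)))
  exact (associated_of_dvd_of_natDegree_le (minpoly.dvd ℚ l hPℚl) hPℚ0 hdeg).irreducible
    (minpoly.irreducible hl)

theorem IsMinIntPoly.isCoprime_map {l : ℝ} {P R : ℤ[X]} (hP : IsMinIntPoly l P)
    (hR : aeval l R ≠ 0) :
    IsCoprime (P.map (Int.castRingHom ℚ)) (R.map (Int.castRingHom ℚ)) := by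
  refine hP.irreducible_map.coprime_iff_not_dvd.2 fun ⟨k, hk⟩ => hR ?_
  have := congrArg (aeval l) hk
  rwa [← algebraMap_int_eq, map_mul, aeval_map_algebraMap, aeval_map_algebraMap, hP.2.1,
    zero_mul] at this

theorem one_le_prod_norm_aeval_roots_of_isCoprime {P R : ℤ[X]}
    (h : IsCoprime (P.map (Int.castRingHom ℚ)) (R.map (Int.castRingHom ℚ))) :
    1 ≤ |(P.leadingCoeff : ℝ)| ^ R.natDegree *
      ((P.map (Int.castRingHom ℂ)).roots.map fun α => ‖aeval α R‖).prod := by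
  have hmap {K : Type} [Field K] [CharZero K] :
      resultant (P.map (Int.castRingHom K)) (R.map (Int.castRingHom K)) = resultant P R := by
    rw [← eq_intCast (Int.castRingHom K), ← resultant_map_map,
      natDegree_map_eq_of_injective Int.cast_injective,
      natDegree_map_eq_of_injective Int.cast_injective]
  have hres : resultant P R ≠ 0 := by
    have := resultant_ne_zero _ _ h
    rwa [hmap, Int.cast_ne_zero] at this
  have hℂ := resultant_eq_prod_eval (P.map (Int.castRingHom ℂ)) (R.map (Int.castRingHom ℂ))
    _ le_rfl (IsAlgClosed.splits _)
  rw [hmap, leadingCoeff_map_of_injective Int.cast_injective] at hℂ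
  calc (1 : ℝ) ≤ |((resultant P R : ℤ) : ℝ)| := by exact_mod_cast Int.one_le_abs hres
    _ = ‖((resultant P R : ℤ) : ℂ)‖ := (Complex.norm_intCast _).symm
    _ = _ := by
      have hprod (s : Multiset ℂ) : ‖s.prod‖ = (s.map (‖·‖)).prod :=
        map_multiset_prod (normHom (α := ℂ)) s
      rw [hℂ, norm_mul, norm_pow, hprod, Multiset.map_map,
        natDegree_map_eq_of_injective Int.cast_injective]
      simp [← algebraMap_int_eq, eval_map_algebraMap]

theorem norm_sum_mul_pow_le {𝕜 : Type*} [NormedRing 𝕜] [NormOneClass 𝕜] {n : ℕ}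
    (c : Fin n → 𝕜) (hc : ∀ k, ‖c k‖ ≤ 1) (x : 𝕜) :
    ‖∑ k : Fin n, c k * x ^ (k : ℕ)‖ ≤ n * max 1 ‖x‖ ^ n := by
  calc ‖∑ k : Fin n, c k * x ^ (k : ℕ)‖ ≤ ∑ k : Fin n, ‖c k * x ^ (k : ℕ)‖ := norm_sum_le _ _
    _ ≤ ∑ _k : Fin n, max 1 ‖x‖ ^ n := by
      gcongr with k
      calc ‖c k * x ^ (k : ℕ)‖ ≤ 1 * ‖x‖ ^ (k : ℕ) :=
            (norm_mul_le _ _).trans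
              (mul_le_mul (hc k) (norm_pow_le _ _) (norm_nonneg _) zero_le_one)
        _ ≤ max 1 ‖x‖ ^ n := by
          rw [one_mul]
          exact (pow_le_pow_left₀ (norm_nonneg x) (le_max_right 1 _) _).trans
            (pow_le_pow_right₀ (le_max_left _ _) k.isLt.le)
    _ = n * max 1 ‖x‖ ^ n := by simp

theorem one_le_mahlerM {P : ℤ[X]} (hP : P ≠ 0) : 1 ≤ mahlerM P := by
  have hlc : (1 : ℝ) ≤ |(P.leadingCoeff : ℝ)| := by
    exact_mod_cast Int.one_le_abs (leadingCoeff_ne_zero.2 hP)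
  have hprod : (1 : ℝ) ≤ ((P.map (Int.castRingHom ℂ)).roots.map fun z => max 1 ‖z‖).prod :=
    Multiset.one_le_prod fun _ hx => by
      obtain ⟨z, -, rfl⟩ := Multiset.mem_map.1 hx
      exact le_max_left _ _
  simpa [mahlerM] using mul_le_mul hlc hprod zero_le_one (by positivity)

theorem mahlerM_eq_of_mem_roots {P : ℤ[X]} {x : ℂ} (hx : x ∈ (P.map (Int.castRingHom ℂ)).roots) :
    mahlerM P = |(P.leadingCoeff : ℝ)| * max 1 ‖x‖ *
      (((P.map (Int.castRingHom ℂ)).roots.erase x).map fun z => max 1 ‖z‖).prod := by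
  conv_lhs => rw [mahlerM, ← Multiset.cons_erase hx, Multiset.map_cons, Multiset.prod_cons]
  ring

theorem Finset.card_le_of_forall_abs_le_of_le_abs_sub {s : Finset ℝ} {B δ : ℝ} (hB0 : 0 ≤ B)
    (hδ : 0 < δ) (hB : ∀ x ∈ s, |x| ≤ B) (hsep : ∀ x ∈ s, ∀ y ∈ s, x ≠ y → δ ≤ |x - y|) :
    (#s : ℝ) ≤ 2 * B / δ + 1 := by
  set g : ℝ → ℕ := fun x => ⌊(x + B) / δ⌋₊
  have hnonneg : ∀ x ∈ s, 0 ≤ (x + B) / δ := fun x hx =>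
    div_nonneg (by linarith [neg_abs_le x, hB x hx]) hδ.le
  have hinj : Set.InjOn g s := by
    intro x hx y hy hxy
    by_contra hne
    have hfloor : ⌊(x + B) / δ⌋ = ⌊(y + B) / δ⌋ := by
      rw [← Int.natCast_floor_eq_floor (hnonneg x hx),
        ← Int.natCast_floor_eq_floor (hnonneg y hy)]
      exact congrArg _ hxy
    have h1 := Int.abs_sub_lt_one_of_floor_eq_floor hfloor
    rw [← sub_div, add_sub_add_right_eq_sub, abs_div, abs_of_pos hδ, div_lt_one hδ] at h1
    exact (hsep x hx y hy hne).not_gt h1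
  have hmaps : Set.MapsTo g s (range (⌊2 * B / δ⌋₊ + 1)) := by
    intro x hx
    rw [coe_range, Set.mem_Iio, Nat.lt_succ_iff]
    exact Nat.floor_le_floor
      (div_le_div_of_nonneg_right (by linarith [le_abs_self x, hB x hx]) hδ.le)
  have hcard := card_le_card_of_injOn g hmaps hinj
  rw [card_range] at hcard
  calc (#s : ℝ) ≤ ((⌊2 * B / δ⌋₊ + 1 : ℕ) : ℝ) := by exact_mod_cast hcard
    _ ≤ 2 * B / δ + 1 := by
      push_cast
      gcongr
      exact Nat.floor_le (by positivity)

theorem IsMinIntPoly.ofReal_mem_roots {l : ℝ} {P : ℤ[X]} (hP : IsMinIntPoly l P) :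
    (l : ℂ) ∈ (P.map (Int.castRingHom ℂ)).roots := by
  rw [mem_roots ((Polynomial.map_ne_zero_iff Int.cast_injective).2 hP.1), IsRoot.def,
    ← algebraMap_int_eq, eval_map_algebraMap, ← Complex.coe_algebraMap, aeval_algebraMap_apply,
    hP.2.1, map_zero]

theorem IsMinIntPoly.pow_le_mul_abs_sum {l : ℝ} {P : ℤ[X]} (hP : IsMinIntPoly l P) {n : ℕ}
    (c : Fin n → ℤ) (hc : ∀ k, |c k| ≤ 1) (hne : ∑ k, (c k : ℝ) * l ^ (k : ℕ) ≠ 0) :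
    max 1 |l| ^ n ≤ n ^ P.natDegree * mahlerM P ^ n * |∑ k, (c k : ℝ) * l ^ (k : ℕ)| := by
  set R : ℤ[X] := ∑ k : Fin n, C (c k) * X ^ (k : ℕ)
  have hRl : aeval l R = ∑ k, (c k : ℝ) * l ^ (k : ℕ) := by simp [R]
  have hRdeg : R.natDegree ≤ n := natDegree_le_of_degree_le (degree_sum_fin_lt c).le
  have hRα (α : ℂ) : ‖aeval α R‖ ≤ n * max 1 ‖α‖ ^ n := by
    simpa [R] using norm_sum_mul_pow_le (fun k => (c k : ℂ))
      (fun k => by rw [Complex.norm_intCast]; exact_mod_cast hc k) α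
  have hres := one_le_prod_norm_aeval_roots_of_isCoprime (hP.isCoprime_map (hRl ▸ hne))
  have hl := hP.ofReal_mem_roots
  rw [← Multiset.cons_erase hl, Multiset.map_cons, Multiset.prod_cons, ← Complex.coe_algebraMap,
    aeval_algebraMap_apply, Complex.coe_algebraMap, Complex.norm_real, Real.norm_eq_abs,
    hRl] at hres
  set rest := (P.map (Int.castRingHom ℂ)).roots.erase (l : ℂ)
  have hrest : (rest.map fun α => ‖aeval α R‖).prod ≤
      n ^ P.natDegree * (rest.map fun α => max 1 ‖α‖).prod ^ n := by
    have hn : 1 ≤ n := Nat.one_le_iff_ne_zero.2 (by rintro rfl; simp at hne)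
    have hcard : Multiset.card rest ≤ P.natDegree :=
      Multiset.card_erase_le.trans ((card_roots' _).trans
        (natDegree_map_eq_of_injective Int.cast_injective P).le)
    calc (rest.map fun α => ‖aeval α R‖).prod
        ≤ (rest.map fun α => (n : ℝ) * max 1 ‖α‖ ^ n).prod :=
          Multiset.prod_map_le_prod_map₀ _ _ (fun _ _ => norm_nonneg _) (fun α _ => hRα α)
      _ = n ^ Multiset.card rest * (rest.map fun α => max 1 ‖α‖).prod ^ n := by
          rw [Multiset.prod_map_mul, Multiset.prod_map_pow, Multiset.map_const',
            Multiset.prod_replicate]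
      _ ≤ n ^ P.natDegree * (rest.map fun α => max 1 ‖α‖).prod ^ n := by
          refine mul_le_mul_of_nonneg_right (pow_le_pow_right₀ (by exact_mod_cast hn) hcard)
            (pow_nonneg (Multiset.prod_nonneg fun _ hx => ?_) n)
          obtain ⟨α, -, rfl⟩ := Multiset.mem_map.1 hx
          positivity
  have hlc : (1 : ℝ) ≤ |(P.leadingCoeff : ℝ)| := by
    exact_mod_cast Int.one_le_abs (leadingCoeff_ne_zero.2 hP.1)
  rw [mahlerM_eq_of_mem_roots hl, Complex.norm_real, Real.norm_eq_abs]
  calc max 1 |l| ^ n = max 1 |l| ^ n * 1 := (mul_one _).symm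
    _ ≤ max 1 |l| ^ n * (|(P.leadingCoeff : ℝ)| ^ n * (|∑ k, (c k : ℝ) * l ^ (k : ℕ)| *
        (n ^ P.natDegree * (rest.map fun α => max 1 ‖α‖).prod ^ n))) := by
      refine mul_le_mul_of_nonneg_left (hres.trans ?_) (by positivity)
      gcongr
      exact mul_nonneg (abs_nonneg _) (Multiset.prod_nonneg fun _ hx => by
        obtain ⟨α, -, rfl⟩ := Multiset.mem_map.1 hx
        exact norm_nonneg _)
    _ = _ := by ring

noncomputable def bitSum (l : ℝ) {n : ℕ} (ω : Fin n → Bool) : ℝ :=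
  ∑ k : Fin n, (if ω k then (1 : ℝ) else 0) * l ^ (k : ℕ)

theorem abs_bitSum_le (l : ℝ) {n : ℕ} (ω : Fin n → Bool) :
    |bitSum l ω| ≤ n * max 1 |l| ^ n :=
  norm_sum_mul_pow_le _ (fun k => by split_ifs <;> simp) l

theorem IsMinIntPoly.pow_le_mul_abs_bitSum_sub {l : ℝ} {P : ℤ[X]} (hP : IsMinIntPoly l P)
    {n : ℕ} {ω ω' : Fin n → Bool} (hne : bitSum l ω ≠ bitSum l ω') :
    max 1 |l| ^ n ≤ n ^ P.natDegree * mahlerM P ^ n * |bitSum l ω - bitSum l ω'| := by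
  set c : Fin n → ℤ := fun k => (if ω k then 1 else 0) - (if ω' k then 1 else 0)
  have hc (k : Fin n) : |c k| ≤ 1 := by
    simp only [c]
    split_ifs <;> simp
  have hsum : ∑ k, (c k : ℝ) * l ^ (k : ℕ) = bitSum l ω - bitSum l ω' := by
    simp only [bitSum, c, ← Finset.sum_sub_distrib, ← sub_mul]
    push_cast
    rfl
  rw [← hsum]
  exact hP.pow_le_mul_abs_sum c hc (hsum ▸ sub_ne_zero.2 hne)

theorem IsMinIntPoly.card_image_bitSum_le {l : ℝ} {P : ℤ[X]} (hP : IsMinIntPoly l P)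
    {n : ℕ} (hn : 0 < n) :
    (#(univ.image (bitSum l (n := n))) : ℝ) ≤ 2 * n ^ (P.natDegree + 1) * mahlerM P ^ n + 1 := by
  have hM : 0 < mahlerM P := zero_lt_one.trans_le (one_le_mahlerM hP.1)
  have hL : 0 < max 1 |l| := lt_max_of_lt_left one_pos
  have hn' : (0 : ℝ) < n := by exact_mod_cast hn
  have hδ : 0 < max 1 |l| ^ n / (n ^ P.natDegree * mahlerM P ^ n) := by positivity
  calc (#(univ.image (bitSum l (n := n))) : ℝ)
      ≤ 2 * (n * max 1 |l| ^ n) / (max 1 |l| ^ n / (n ^ P.natDegree * mahlerM P ^ n)) + 1 := by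
        refine card_le_of_forall_abs_le_of_le_abs_sub (by positivity) hδ ?_ ?_
        · simp only [mem_image, mem_univ, true_and, forall_exists_index, forall_apply_eq_imp_iff]
          exact abs_bitSum_le l
        · simp only [mem_image, mem_univ, true_and, forall_exists_index, forall_apply_eq_imp_iff]
          intro ω ω' hne
          rw [div_le_iff₀' (by positivity)]
          exact hP.pow_le_mul_abs_bitSum_sub hne
    _ = 2 * n ^ (P.natDegree + 1) * mahlerM P ^ n + 1 := by
        field_simp
        ring

theorem eventually_const_mul_pow_le_exp (C : ℝ) (k : ℕ) {ε : ℝ} (hε : 0 < ε) :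
    ∀ᶠ n : ℕ in atTop, C * (n : ℝ) ^ k ≤ Real.exp (ε * n) := by
  have := ((isLittleO_pow_exp_pos_mul_atTop k hε).const_mul_left C).bound one_pos
  filter_upwards [tendsto_natCast_atTop_atTop.eventually this] with n hn
  simpa [abs_of_pos (Real.exp_pos _)] using (le_abs_self _).trans hn

/-- For a real algebraic `λ`, the number of distinct values `∑_{k<n} ε_k λ^k`,
`ε_k ∈ {0,1}`, is at most `e^{εn} M(λ)^n` for all large `n`. -/
theorem stmt14 (l : ℝ) (P : Polynomial ℤ) (hP : IsMinIntPoly l P) :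
    ∀ ε : ℝ, 0 < ε → ∃ N : ℕ, ∀ n : ℕ, N ≤ n →
      ((Finset.univ.image
          (fun ω : Fin n → Bool => ∑ k : Fin n, (if ω k then (1:ℝ) else 0) * l ^ (k : ℕ))).card : ℝ)
        ≤ Real.exp (ε * n) * mahlerM P ^ n := by
  intro ε hε
  obtain ⟨N, hN⟩ := eventually_atTop.1
    ((eventually_const_mul_pow_le_exp 3 (P.natDegree + 1) hε).and (eventually_gt_atTop 0))
  refine ⟨N, fun n hn => ?_⟩
  obtain ⟨hexp, hn0⟩ := hN n hn
  have hM : 1 ≤ mahlerM P ^ n := one_le_pow₀ (one_le_mahlerM hP.1)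
  have hnd : (1 : ℝ) ≤ n ^ (P.natDegree + 1) := one_le_pow₀ (by exact_mod_cast hn0)
  calc (#(univ.image (bitSum l (n := n))) : ℝ)
      ≤ 2 * n ^ (P.natDegree + 1) * mahlerM P ^ n + 1 := hP.card_image_bitSum_le hn0
    _ ≤ 3 * n ^ (P.natDegree + 1) * mahlerM P ^ n := by nlinarith
    _ ≤ Real.exp (ε * n) * mahlerM P ^ n := by gcongr
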